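/- Let m, n ∈ ℕ, let q ∈ ℝ with 0 < q < 1, and let α ∈ ℝ with α > 0. Then ∫_{−∞}^{∞} (1 + q^{2x}α²) · 𝗛_n[q^xα|q] · 𝗛_m[q^xα|q] · q^{2x²−x} α^{4x} dx = δ_{m,n} · [√(2π) · α · exp(2(log α)² / log(1/q)) / (q^{1/8} √(log(1/q)))] · q^{−n(n−1)/2} (q;q)_n / q^n. -/

import Mathlib

open MeasureTheory

noncomputable section

/-- Finite q-shifted factorial `(a;q)_n` (real version). -/
def qpR (q a : ℝ) (n : ℕ) : ℝ := ∏ j ∈ Finset.range n, (1 - a * q ^ j)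

/-- Infinite q-shifted factorial `(a;q)_∞` (real version). -/
def qpiR (q a : ℝ) : ℝ := ∏' j : ℕ, (1 - a * q ^ j)

/-- The continuous q⁻¹-Hermite polynomial `𝗛_n[z|q]` (real version). -/
def HcR (q z : ℝ) (n : ℕ) : ℝ :=
  z ^ n * ∑ k ∈ Finset.range (n + 1),
    qpR q (q ^ (-(n : ℤ))) k / qpR q q k * (-1) ^ k * q ^ ((k : ℤ) * ((k : ℤ) - 1) / 2) *
      (-(q / z ^ 2)) ^ k

/-!
Put `z = q^x α`. The weight `q^{2x²-x} α^{4x}` is Gaussian in `x`, so for every real `t`,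
`∫ z^t q^{2x²-x} α^{4x} dx = K q^{-(t-1)²/8}` with `K` independent of `t`. Expanding
`𝗛_n[z|q] = Σ_k e_{n,k} z^{n-2k}` turns the integral into `K` times a finite double sum. In the
sum over `k` the Gaussian factor `q^{-(t-1)²/8}` exactly turns `e_{n,k}` into the coefficients of
the terminating q-binomial theorem, which leaves products `(q^{(m-n)/2-l}; q)_n`; these vanish
when `n > m` and `n ≡ m (mod 2)`, and for `m = n` only the terms `l = 0` and `l = n` survive.
For odd `n + m` the sum vanishes by the symmetry `e_{n,n-k} = (-1)^n e_{n,k}`, because the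
moment `q^{-(t-1)²/8} + q^{-(t+1)²/8}` of `(1 + z²) z^t` is even in `t`.
-/

open Finset Real MeasureTheory

namespace QInvHermite

variable {q : ℝ}

/-- `(q^u; q)_k` for a real exponent `u`. -/
def qPoch (q u : ℝ) (k : ℕ) : ℝ := ∏ j ∈ range k, (1 - q ^ (u + j))

@[simp]
lemma qPoch_zero (u : ℝ) : qPoch q u 0 = 1 := prod_range_zero _

lemma qPoch_succ (u : ℝ) (k : ℕ) : qPoch q u (k + 1) = qPoch q u k * (1 - q ^ (u + k)) :=
  prod_range_succ _ _

lemma qPoch_succ' (u : ℝ) (k : ℕ) : qPoch q u (k + 1) = (1 - q ^ u) * qPoch q (u + 1) k := by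
  rw [qPoch, prod_range_succ', mul_comm]
  congr 1
  · simp
  · exact prod_congr rfl fun j _ => by push_cast; ring_nf

lemma qPoch_add (u : ℝ) (a b : ℕ) : qPoch q u (a + b) = qPoch q u a * qPoch q (u + a) b := by
  simp only [qPoch, prod_range_add, Nat.cast_add, add_assoc]

lemma qpR_rpow (hq : 0 < q) (u : ℝ) (k : ℕ) : qpR q (q ^ u) k = qPoch q u k :=
  prod_congr rfl fun j _ => by rw [← rpow_natCast q j, ← rpow_add hq]

lemma qpR_self (hq : 0 < q) (k : ℕ) : qpR q q k = qPoch q 1 k := by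
  simpa using qpR_rpow hq 1 k

lemma qPoch_pos (hq0 : 0 < q) (hq1 : q < 1) {u : ℝ} (hu : 0 < u) (k : ℕ) : 0 < qPoch q u k :=
  prod_pos fun j _ => sub_pos.2 (rpow_lt_one hq0.le hq1 (by positivity))

lemma qPoch_eq_zero {u : ℝ} {i k : ℕ} (hik : i < k) (hu : u + i = 0) : qPoch q u k = 0 :=
  prod_eq_zero (mem_range.2 hik) (by rw [hu, rpow_zero, sub_self])

lemma qPoch_neg (hq : 0 < q) (u : ℝ) (k : ℕ) :
    qPoch q (1 - u - k) k = (-1) ^ k * q ^ (-(u * k + k * (k - 1) / 2)) * qPoch q u k := by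
  induction k with
  | zero => simp
  | succ k ih =>
    have hflip : 1 - q ^ (-(u + k)) = -q ^ (-(u + k)) * (1 - q ^ (u + k)) := by
      rw [rpow_neg hq.le]; field_simp; ring
    have hexp : q ^ (-(u * (k + 1) + (k + 1) * (k + 1 - 1) / 2)) =
        q ^ (-(u * k + k * (k - 1) / 2)) * q ^ (-(u + k)) := by
      rw [← rpow_add hq]; ring_nf
    rw [qPoch_succ', qPoch_succ, show 1 - u - ↑(k + 1) + 1 = 1 - u - k by push_cast; ring, ih,
      show 1 - u - ((k + 1 : ℕ) : ℝ) = -(u + k) by push_cast; ring, hflip]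
    push_cast
    rw [hexp]
    ring

def qBinomCoeff (q : ℝ) (n k : ℕ) : ℝ := qPoch q (-n) k / qPoch q 1 k

@[simp]
lemma qBinomCoeff_zero_right (n : ℕ) : qBinomCoeff q n 0 = 1 := by simp [qBinomCoeff]

lemma qBinomCoeff_succ_self (n : ℕ) : qBinomCoeff q n (n + 1) = 0 := by
  rw [qBinomCoeff, qPoch_eq_zero (i := n) (by omega) (by ring), zero_div]

lemma qBinomCoeff_succ_succ (hq0 : 0 < q) (hq1 : q < 1) (n k : ℕ) :
    qBinomCoeff q (n + 1) (k + 1) =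
      qBinomCoeff q n (k + 1) - q ^ (-(n : ℝ) - 1) * qBinomCoeff q n k := by
  have hk : (1 : ℝ) - q ^ (1 + k : ℝ) ≠ 0 :=
    (sub_pos.2 (rpow_lt_one hq0.le hq1 (by positivity))).ne'
  have hP := (qPoch_pos hq0 hq1 one_pos k).ne'
  have hexp : q ^ ((k : ℝ) - n) = q ^ (-(n : ℝ) - 1) * q ^ (1 + k : ℝ) := by
    rw [← rpow_add hq0]; ring_nf
  simp only [qBinomCoeff, qPoch_succ' (-((n + 1 : ℕ) : ℝ)), qPoch_succ (-(n : ℝ)),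
    qPoch_succ 1]
  rw [show -((n + 1 : ℕ) : ℝ) + 1 = -n by push_cast; ring,
    show -((n + 1 : ℕ) : ℝ) = -n - 1 by push_cast; ring, show -(n : ℝ) + k = k - n by ring,
    hexp]
  field_simp
  ring

theorem sum_qBinomCoeff_mul_pow (hq0 : 0 < q) (hq1 : q < 1) (n : ℕ) (y : ℝ) :
    ∑ k ∈ range (n + 1), qBinomCoeff q n k * y ^ k =
      ∏ j ∈ range n, (1 - y * q ^ ((j : ℝ) - n)) := by
  induction n with
  | zero => simp
  | succ n ih =>
    rw [sum_range_succ', prod_range_succ']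
    have hshift : ∑ k ∈ range (n + 1), qBinomCoeff q n (k + 1) * y ^ (k + 1) =
        ∑ k ∈ range (n + 1), qBinomCoeff q n k * y ^ k - 1 := by
      have h := sum_range_succ' (fun k => qBinomCoeff q n k * y ^ k) (n + 1)
      rw [sum_range_succ, qBinomCoeff_succ_self] at h
      simp only [zero_mul, add_zero, qBinomCoeff_zero_right, pow_zero, mul_one] at h
      linarith
    have hfactor : ∑ k ∈ range (n + 1), q ^ (-(n : ℝ) - 1) * qBinomCoeff q n k * y ^ (k + 1) =
        q ^ (-(n : ℝ) - 1) * y * ∑ k ∈ range (n + 1), qBinomCoeff q n k * y ^ k := by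
      rw [mul_sum]; exact sum_congr rfl fun k _ => by ring
    have hprod : ∏ j ∈ range n, (1 - y * q ^ (((j + 1 : ℕ) : ℝ) - (n + 1 : ℕ))) =
        ∏ j ∈ range n, (1 - y * q ^ ((j : ℝ) - n)) :=
      prod_congr rfl fun j _ => by push_cast; ring_nf
    simp only [qBinomCoeff_succ_succ hq0 hq1, sub_mul, sum_sub_distrib, hshift, hfactor, hprod,
      ← ih, qBinomCoeff_zero_right, pow_zero, mul_one]
    generalize ∑ k ∈ range (n + 1), qBinomCoeff q n k * y ^ k = S
    push_cast
    ring_nf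

lemma zpow_mul_pred_div_two (a : ℤ) :
    q ^ (a * (a - 1) / 2) = q ^ ((a : ℝ) * (a - 1) / 2) := by
  rw [← rpow_intCast, Int.cast_div (Int.even_mul_pred_self a).two_dvd (by norm_num)]
  push_cast
  rfl

def hermiteCoeff (q : ℝ) (n k : ℕ) : ℝ := qBinomCoeff q n k * q ^ ((k : ℝ) * (k + 1) / 2)

@[simp]
lemma hermiteCoeff_zero_right (n : ℕ) : hermiteCoeff q n 0 = 1 := by simp [hermiteCoeff]

theorem HcR_eq_sum (hq : 0 < q) {z : ℝ} (hz : 0 < z) (n : ℕ) :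
    HcR q z n = ∑ k ∈ range (n + 1), hermiteCoeff q n k * z ^ ((n : ℝ) - 2 * k) := by
  rw [HcR, mul_sum]
  refine sum_congr rfl fun k _ => ?_
  have hqn : q ^ (-(n : ℤ)) = q ^ (-(n : ℝ)) := by rw [← rpow_intCast]; push_cast; rfl
  have hqk : q ^ ((k : ℝ) * (k + 1) / 2) = q ^ ((k : ℝ) * (k - 1) / 2) * q ^ k := by
    rw [← rpow_natCast, ← rpow_add hq]; ring_nf
  have hzk : z ^ ((n : ℝ) - 2 * k) = z ^ n / (z ^ k) ^ 2 := by
    rw [rpow_sub hz, ← pow_mul, mul_comm k, ← rpow_natCast, ← rpow_natCast z (2 * k)]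
    push_cast; rfl
  have hsign : ((-1 : ℝ) ^ k) ^ 2 = 1 := by rw [← pow_mul, mul_comm, pow_mul]; norm_num
  rw [hermiteCoeff, qBinomCoeff, hqn, qpR_rpow hq, qpR_self hq, zpow_mul_pred_div_two, hqk, hzk,
    neg_pow (q / z ^ 2), div_pow, ← pow_mul, mul_comm 2 k, pow_mul]
  push_cast
  linear_combination qPoch q (-n) k / qPoch q 1 k * q ^ ((k : ℝ) * (k - 1) / 2) * q ^ k *
    (z ^ n / (z ^ k) ^ 2) * hsign

lemma hermiteCoeff_eq (hq0 : 0 < q) (hq1 : q < 1) {n k : ℕ} (hk : k ≤ n) :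
    hermiteCoeff q n k =
      (-1) ^ k * q ^ ((k : ℝ) ^ 2 - n * k) * qPoch q 1 n / (qPoch q 1 k * qPoch q 1 (n - k)) := by
  obtain ⟨d, rfl⟩ : ∃ d, n = d + k := ⟨n - k, by omega⟩
  have hneg := qPoch_neg hq0 (d + 1) k
  rw [show 1 - ((d : ℝ) + 1) - k = -((d + k : ℕ) : ℝ) by push_cast; ring] at hneg
  have hexp : q ^ (-((d + 1) * k + (k : ℝ) * (k - 1) / 2)) * q ^ ((k : ℝ) * (k + 1) / 2) =
      q ^ ((k : ℝ) ^ 2 - (d + k : ℕ) * k) := by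
    rw [← rpow_add hq0]; push_cast; ring_nf
  rw [hermiteCoeff, qBinomCoeff, hneg, qPoch_add 1 d k, Nat.add_sub_cancel, ← hexp,
    show (1 : ℝ) + d = d + 1 by ring]
  have := (qPoch_pos hq0 hq1 one_pos k).ne'
  have := (qPoch_pos hq0 hq1 one_pos d).ne'
  have := (qPoch_pos hq0 hq1 (by positivity : (0 : ℝ) < d + 1) k).ne'
  field_simp

lemma hermiteCoeff_sub (hq0 : 0 < q) (hq1 : q < 1) {n k : ℕ} (hk : k ≤ n) :
    hermiteCoeff q n (n - k) = (-1) ^ n * hermiteCoeff q n k := by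
  obtain ⟨d, rfl⟩ : ∃ d, n = d + k := ⟨n - k, by omega⟩
  rw [hermiteCoeff_eq hq0 hq1 (Nat.sub_le _ k), hermiteCoeff_eq hq0 hq1 hk, Nat.sub_sub_self hk,
    Nat.add_sub_cancel,
    show ((d : ℕ) : ℝ) ^ 2 - (d + k : ℕ) * d = (k : ℝ) ^ 2 - (d + k : ℕ) * k by
      push_cast; ring,
    mul_comm (qPoch q 1 k), pow_add]
  have hsign : ((-1 : ℝ) ^ k) ^ 2 = 1 := by rw [← pow_mul, mul_comm, pow_mul]; norm_num
  linear_combination -((-1) ^ d * q ^ ((k : ℝ) ^ 2 - (d + k : ℕ) * k) * qPoch q 1 (d + k) /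
    (qPoch q 1 d * qPoch q 1 k)) * hsign

lemma hermiteCoeff_self (hq0 : 0 < q) (hq1 : q < 1) (n : ℕ) : hermiteCoeff q n n = (-1) ^ n := by
  simpa using hermiteCoeff_sub hq0 hq1 (Nat.zero_le n)

def momentFactor (q t : ℝ) : ℝ := q ^ (-((t - 1) ^ 2 / 8))

lemma momentFactor_neg (t : ℝ) : momentFactor q (-t) = momentFactor q (t + 2) := by
  unfold momentFactor; ring_nf

lemma hermiteCoeff_mul_momentFactor (hq : 0 < q) (n k : ℕ) (N : ℝ) :
    hermiteCoeff q n k * momentFactor q (N - 2 * k) =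
      momentFactor q N * (qBinomCoeff q n k * (q ^ (N / 2)) ^ k) := by
  rw [hermiteCoeff, momentFactor, momentFactor, ← rpow_natCast (q ^ (N / 2)), ← rpow_mul hq.le]
  rw [mul_assoc, ← rpow_add hq, mul_left_comm, ← rpow_add hq]
  ring_nf

theorem sum_hermiteCoeff_mul_momentFactor (hq0 : 0 < q) (hq1 : q < 1) (n : ℕ) (N : ℝ) :
    ∑ k ∈ range (n + 1), hermiteCoeff q n k * momentFactor q (N - 2 * k) =
      momentFactor q N * qPoch q (N / 2 - n) n := by
  simp only [hermiteCoeff_mul_momentFactor hq0, ← mul_sum, sum_qBinomCoeff_mul_pow hq0 hq1]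
  congr 1
  exact prod_congr rfl fun j _ => by rw [← rpow_add hq0]; ring_nf

def hermitePairing (q : ℝ) (n m : ℕ) : ℝ :=
  ∑ k ∈ range (n + 1), ∑ l ∈ range (m + 1), hermiteCoeff q n k * hermiteCoeff q m l *
    (momentFactor q (n + m - 2 * k - 2 * l) + momentFactor q (n + m - 2 * k - 2 * l + 2))

lemma hermitePairing_comm (n m : ℕ) : hermitePairing q n m = hermitePairing q m n := by
  rw [hermitePairing, hermitePairing, sum_comm]
  exact sum_congr rfl fun l _ => sum_congr rfl fun k _ => by ring_nf

lemma hermitePairing_eq_sum (hq0 : 0 < q) (hq1 : q < 1) (n m : ℕ) :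
    hermitePairing q n m = ∑ l ∈ range (m + 1), hermiteCoeff q m l *
      (momentFactor q (n + m - 2 * l) * qPoch q ((m - n) / 2 - l) n +
        momentFactor q (n + m - 2 * l + 2) * qPoch q ((m - n) / 2 - l + 1) n) := by
  rw [hermitePairing, sum_comm]
  refine sum_congr rfl fun l _ => ?_
  have h₀ := sum_hermiteCoeff_mul_momentFactor hq0 hq1 n (n + m - 2 * l)
  have h₂ := sum_hermiteCoeff_mul_momentFactor hq0 hq1 n (n + m - 2 * l + 2)
  rw [show ((n : ℝ) + m - 2 * l) / 2 - n = (m - n) / 2 - l by ring] at h₀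
  rw [show ((n : ℝ) + m - 2 * l + 2) / 2 - n = (m - n) / 2 - l + 1 by ring] at h₂
  rw [← h₀, ← h₂, ← sum_add_distrib, mul_sum]
  exact sum_congr rfl fun k _ => by ring_nf

lemma hermitePairing_eq_zero_of_odd (hq0 : 0 < q) (hq1 : q < 1) {n m : ℕ} (hodd : Odd (n + m)) :
    hermitePairing q n m = 0 := by
  -- reflecting `k ↦ n - k`, `l ↦ m - l` multiplies every term by `(-1) ^ (n + m)`
  have hreflect : hermitePairing q n m = (-1) ^ (n + m) * hermitePairing q n m := by
    conv_lhs => rw [hermitePairing, ← sum_range_reflect]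
    rw [hermitePairing, mul_sum]
    refine sum_congr rfl fun k hk => ?_
    rw [← sum_range_reflect, mul_sum]
    refine sum_congr rfl fun l hl => ?_
    have hk : k ≤ n := by have := mem_range.1 hk; omega
    have hl : l ≤ m := by have := mem_range.1 hl; omega
    rw [Nat.add_sub_cancel, Nat.add_sub_cancel, hermiteCoeff_sub hq0 hq1 hk,
      hermiteCoeff_sub hq0 hq1 hl, Nat.cast_sub hk, Nat.cast_sub hl,
      show (n : ℝ) + m - 2 * (n - k) - 2 * (m - l) = -(n + m - 2 * k - 2 * l) by ring,
      show -((n : ℝ) + m - 2 * k - 2 * l) + 2 = -(n + m - 2 * k - 2 * l - 2) by ring,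
      momentFactor_neg, momentFactor_neg, pow_add]
    ring_nf
  rw [hodd.neg_one_pow] at hreflect
  linarith

lemma hermitePairing_eq_zero_of_lt (hq0 : 0 < q) (hq1 : q < 1) {n m : ℕ} (hlt : m < n)
    (heven : Even (n + m)) : hermitePairing q n m = 0 := by
  obtain ⟨t, rfl⟩ : ∃ t, n = m + 2 * (t + 1) :=
    ⟨(n - m) / 2 - 1, by rcases heven with ⟨c, hc⟩; omega⟩
  rw [hermitePairing_eq_sum hq0 hq1]
  refine sum_eq_zero fun l hl => ?_
  have hl : l ≤ m := by have := mem_range.1 hl; omega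
  rw [qPoch_eq_zero (i := l + t + 1) (by omega) (by push_cast; ring),
    qPoch_eq_zero (i := l + t) (by omega) (by push_cast; ring)]
  ring

lemma hermitePairing_self (hq0 : 0 < q) (hq1 : q < 1) (n : ℕ) :
    hermitePairing q n n = 2 * q ^ (-(1 : ℝ) / 8 - n * (n + 1) / 2) * qPoch q 1 n := by
  rw [hermitePairing_eq_sum hq0 hq1]
  conv_lhs => simp only [mul_add, sum_add_distrib, sub_self, zero_div, zero_sub]
  rw [sum_eq_single_of_mem n (self_mem_range_succ n) ?_, sum_eq_single_of_mem 0 (by simp) ?_]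
  · have hP := qPoch_neg hq0 1 n
    rw [show (1 : ℝ) - 1 - n = -n by ring] at hP
    rw [hermiteCoeff_self hq0 hq1, hermiteCoeff_zero_right, hP]
    have hG₀ : momentFactor q (n + n - 2 * n) = q ^ (-(1 : ℝ) / 8) := by
      rw [momentFactor]; ring_nf
    have hG₂ : momentFactor q (n + n - 2 * (0 : ℕ) + 2) =
        q ^ (-(1 : ℝ) / 8) * q ^ (-(1 * n + n * (n - 1) / 2 : ℝ)) := by
      rw [momentFactor, ← rpow_add hq0]; push_cast; ring_nf
    have hexp : q ^ (-(1 : ℝ) / 8) * q ^ (-(1 * n + n * (n - 1) / 2 : ℝ)) =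
        q ^ (-(1 : ℝ) / 8 - n * (n + 1) / 2) := by
      rw [← rpow_add hq0]; ring_nf
    have hsign : ((-1 : ℝ) ^ n) ^ 2 = 1 := by rw [← pow_mul, mul_comm, pow_mul]; norm_num
    rw [hG₀, hG₂, show -((0 : ℕ) : ℝ) + 1 = 1 by simp]
    linear_combination
      q ^ (-(1 : ℝ) / 8) * q ^ (-(1 * n + n * (n - 1) / 2 : ℝ)) * qPoch q 1 n * hsign +
        2 * qPoch q 1 n * hexp
  · intro l hl hl0
    have := mem_range.1 hl
    rw [qPoch_eq_zero (i := l - 1) (by omega)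
      (by rw [Nat.cast_sub (Nat.one_le_iff_ne_zero.2 hl0)]; ring)]
    ring
  · intro l hl hln
    rw [qPoch_eq_zero (i := l) (by have := mem_range.1 hl; omega) (by ring)]
    ring

theorem hermitePairing_eq (hq0 : 0 < q) (hq1 : q < 1) (n m : ℕ) :
    hermitePairing q n m =
      if m = n then 2 * q ^ (-(1 : ℝ) / 8 - n * (n + 1) / 2) * qPoch q 1 n else 0 := by
  split_ifs with h
  · subst h; exact hermitePairing_self hq0 hq1 m
  rcases Nat.even_or_odd (n + m) with heven | hodd
  · rcases lt_or_gt_of_ne h with hlt | hgt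
    · exact hermitePairing_eq_zero_of_lt hq0 hq1 hlt heven
    · rw [hermitePairing_comm]
      exact hermitePairing_eq_zero_of_lt hq0 hq1 hgt (by rwa [add_comm])
  · exact hermitePairing_eq_zero_of_odd hq0 hq1 hodd

lemma exp_quadratic_eq {B : ℝ} (hB : B ≠ 0) (u v x : ℝ) :
    exp (B * x ^ 2 + u * x + v) =
      exp (v - u ^ 2 / (4 * B)) * exp (-(-B) * (x + u / (2 * B)) ^ 2) := by
  rw [← exp_add]; congr 1; field_simp; ring

lemma integrable_exp_quadratic {B : ℝ} (hB : B < 0) (u v : ℝ) :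
    Integrable fun x : ℝ => exp (B * x ^ 2 + u * x + v) := by
  simp_rw [exp_quadratic_eq hB.ne]
  exact ((integrable_exp_neg_mul_sq (neg_pos.2 hB)).comp_add_right _).const_mul _

lemma integral_exp_quadratic {B : ℝ} (hB : B < 0) (u v : ℝ) :
    ∫ x : ℝ, exp (B * x ^ 2 + u * x + v) = √(π / -B) * exp (v - u ^ 2 / (4 * B)) := by
  simp_rw [exp_quadratic_eq hB.ne]
  rw [integral_const_mul, integral_add_right_eq_self (fun x => exp (-(-B) * x ^ 2)),
    integral_gaussian, mul_comm]

section Weight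

variable {α : ℝ}

lemma rpow_mul_weight_eq_exp (hq : 0 < q) (hα : 0 < α) (t x : ℝ) :
    (q ^ x * α) ^ t * (q ^ (2 * x ^ 2 - x) * α ^ (4 * x)) =
      exp (2 * log q * x ^ 2 + ((t - 1) * log q + 4 * log α) * x + t * log α) := by
  rw [rpow_def_of_pos (mul_pos (rpow_pos_of_pos hq x) hα),
    log_mul (rpow_pos_of_pos hq x).ne' hα.ne', log_rpow hq, rpow_def_of_pos hq,
    rpow_def_of_pos hα, ← exp_add, ← exp_add]
  ring_nf

lemma integrable_rpow_mul_weight (hq0 : 0 < q) (hq1 : q < 1) (hα : 0 < α) (t : ℝ) :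
    Integrable fun x : ℝ => (q ^ x * α) ^ t * (q ^ (2 * x ^ 2 - x) * α ^ (4 * x)) := by
  simp_rw [rpow_mul_weight_eq_exp hq0 hα]
  exact integrable_exp_quadratic (by linarith [log_neg hq0 hq1]) _ _

theorem integral_rpow_mul_weight (hq0 : 0 < q) (hq1 : q < 1) (hα : 0 < α) (t : ℝ) :
    ∫ x : ℝ, (q ^ x * α) ^ t * (q ^ (2 * x ^ 2 - x) * α ^ (4 * x)) =
      √(π / (2 * log (1 / q))) * α * exp (2 * log α ^ 2 / log (1 / q)) * momentFactor q t := by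
  have hL := log_neg hq0 hq1
  simp_rw [rpow_mul_weight_eq_exp hq0 hα]
  rw [integral_exp_quadratic (by linarith) _ _, one_div, log_inv, momentFactor,
    rpow_def_of_pos hq0, ← exp_log hα, log_exp, mul_assoc, ← exp_add, mul_assoc, ← exp_add]
  congr 2
  · ring_nf
  · field_simp [hL.ne]; ring

end Weight

lemma one_add_sq_mul_HcR_mul_HcR (hq : 0 < q) {z : ℝ} (hz : 0 < z) (n m : ℕ) :
    (1 + z ^ 2) * HcR q z n * HcR q z m =
      ∑ k ∈ range (n + 1), ∑ l ∈ range (m + 1), hermiteCoeff q n k * hermiteCoeff q m l *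
        (z ^ ((n + m - 2 * k - 2 * l : ℝ)) + z ^ ((n + m - 2 * k - 2 * l + 2 : ℝ))) := by
  rw [HcR_eq_sum hq hz, HcR_eq_sum hq hz, mul_assoc, sum_mul_sum, mul_sum]
  refine sum_congr rfl fun k _ => ?_
  rw [mul_sum]
  refine sum_congr rfl fun l _ => ?_
  have h₁ : z ^ ((n : ℝ) - 2 * k) * z ^ ((m : ℝ) - 2 * l) =
      z ^ ((n + m - 2 * k - 2 * l : ℝ)) := by
    rw [← rpow_add hz]; ring_nf
  rw [rpow_add hz, rpow_two, ← h₁]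
  ring

theorem integral_weighted_HcR_mul_HcR (hq0 : 0 < q) (hq1 : q < 1) {α : ℝ} (hα : 0 < α)
    (n m : ℕ) :
    ∫ x : ℝ, (1 + q ^ (2 * x) * α ^ 2) * HcR q (q ^ x * α) n * HcR q (q ^ x * α) m *
        q ^ (2 * x ^ 2 - x) * α ^ (4 * x) =
      √(π / (2 * log (1 / q))) * α * exp (2 * log α ^ 2 / log (1 / q)) *
        hermitePairing q n m := by
  set W : ℝ → ℝ → ℝ := fun t x => (q ^ x * α) ^ t * (q ^ (2 * x ^ 2 - x) * α ^ (4 * x))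
  have hW : ∀ t, Integrable (W t) := integrable_rpow_mul_weight hq0 hq1 hα
  have hexpand : ∀ x : ℝ,
      (1 + q ^ (2 * x) * α ^ 2) * HcR q (q ^ x * α) n * HcR q (q ^ x * α) m *
        q ^ (2 * x ^ 2 - x) * α ^ (4 * x) =
      ∑ k ∈ range (n + 1), ∑ l ∈ range (m + 1), hermiteCoeff q n k * hermiteCoeff q m l *
        (W (n + m - 2 * k - 2 * l) x + W (n + m - 2 * k - 2 * l + 2) x) := by
    intro x
    have hsq : q ^ (2 * x) * α ^ 2 = (q ^ x * α) ^ 2 := by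
      rw [mul_pow, ← rpow_mul_natCast hq0.le, Nat.cast_two, mul_comm x]
    rw [hsq, mul_assoc _ _ (α ^ (4 * x)),
      one_add_sq_mul_HcR_mul_HcR hq0 (mul_pos (rpow_pos_of_pos hq0 x) hα), sum_mul]
    exact sum_congr rfl fun k _ => by rw [sum_mul]; exact sum_congr rfl fun l _ => by ring
  have hterm : ∀ a b c : ℝ, Integrable fun x => c * (W a x + W b x) :=
    fun a b c => ((hW a).add (hW b)).const_mul c
  simp_rw [hexpand]
  rw [integral_finsetSum _ fun k _ => integrable_finsetSum _ fun l _ => hterm _ _ _,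
    hermitePairing, mul_sum]
  refine sum_congr rfl fun k _ => ?_
  rw [integral_finsetSum _ fun l _ => hterm _ _ _, mul_sum]
  refine sum_congr rfl fun l _ => ?_
  rw [integral_const_mul, integral_add (hW _) (hW _), integral_rpow_mul_weight hq0 hq1 hα,
    integral_rpow_mul_weight hq0 hq1 hα]
  ring

end QInvHermite

open QInvHermite

theorem cont_qinv_Hermite_continuous_orthogonality
    (m n : ℕ) (q α : ℝ) (hq0 : 0 < q) (hq1 : q < 1) (hα : 0 < α) :
    ∫ x : ℝ, (1 + q ^ (2 * x) * α ^ 2) * HcR q (q ^ x * α) n * HcR q (q ^ x * α) m *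
        q ^ (2 * x ^ 2 - x) * α ^ (4 * x) =
      (if m = n then (1 : ℝ) else 0) *
        (Real.sqrt (2 * Real.pi) * α * Real.exp (2 * Real.log α ^ 2 / Real.log (1 / q)) /
          (q ^ ((1 : ℝ) / 8) * Real.sqrt (Real.log (1 / q)))) *
        q ^ (-((n : ℤ) * ((n : ℤ) - 1) / 2)) * qpR q q n / q ^ n := by
  have hlog : 0 < log (1 / q) := log_pos (one_lt_one_div hq0 hq1)
  have hsqrt : √(π / (2 * log (1 / q))) = √(2 * π) / (2 * √(log (1 / q))) := by
    rw [show (2 : ℝ) * √(log (1 / q)) = √(4 * log (1 / q)) by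
        rw [sqrt_mul (by norm_num), show (4 : ℝ) = 2 ^ 2 by norm_num, sqrt_sq (by norm_num)],
      ← sqrt_div (by positivity)]
    congr 1
    field_simp
    ring
  rw [integral_weighted_HcR_mul_HcR hq0 hq1 hα, hermitePairing_eq hq0 hq1, qpR_self hq0,
    zpow_neg, zpow_mul_pred_div_two, ← rpow_natCast q n]
  split_ifs
  · have hpow : q ^ (-(1 : ℝ) / 8 - n * (n + 1) / 2) =
        (q ^ ((1 : ℝ) / 8) * q ^ ((n : ℝ) * (n - 1) / 2) * q ^ (n : ℝ))⁻¹ := by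
      rw [← rpow_add hq0, ← rpow_add hq0, ← rpow_neg hq0.le]; ring_nf
    push_cast
    rw [hsqrt, hpow]
    field_simp
  · simp
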